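/- Consistency of the subgroup g-formula estimator with correctly specified outcome regression: let (Xᵢ, Aᵢ, Yᵢ), i ≥ 1, be i.i.d. copies of (X, A, Y) (with associated potential outcomes satisfying consistency, mean exchangeability and positivity), let w ⊆ 𝒳 be a measurable subgroup with P(X ∈ w) > 0, and let m_a be a version of the outcome regression E[Y | X, A = a]. Then, almost surely, ( Σ_{i=1}^{n} 1{Xᵢ ∈ w} · m_a(Xᵢ) ) / ( Σ_{i=1}^{n} 1{Xᵢ ∈ w} ) converges as n → ∞ to E[Y^a | X ∈ w] = (1/P(X ∈ w)) ∫_{{X ∈ w}} Y^a dP. -/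

import Mathlib

/-!
By consistency `Y = Yᵃ` on `{A = a}`, so the outcome-regression and mean-exchangeability
identities give `∫_{X ∈ B, A = a} (mₐ - νₐ)(X) = 0` for every measurable `B`. Pulling the
`σ(X)`-measurable factor `(mₐ - νₐ)(X)` out of `E[1{A = a} | X] = eₐ(X)` turns this into
`∫_{X ∈ B} (mₐ - νₐ)(X) eₐ(X) = 0`, and positivity of `eₐ` forces `mₐ(X) = νₐ(X)` a.s.
Hence `E[1{X ∈ w} mₐ(X)] = E[1{X ∈ w} Yᵃ]`, and the strong law of large numbers applied to
numerator and denominator (each divided by `n`) gives the limit.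
-/

open MeasureTheory Filter Topology ProbabilityTheory Finset

theorem ae_eq_zero_of_setIntegral_inter_eq_zero {Ω : Type*} {m : MeasurableSpace Ω}
    [mΩ : MeasurableSpace Ω] {μ : Measure Ω} [IsFiniteMeasure μ] (hm : m ≤ mΩ) {f : Ω → ℝ}
    (hf : StronglyMeasurable[m] f) (hfi : Integrable f μ) {t : Set Ω} (ht : MeasurableSet t)
    (hpos : ∀ᵐ ω ∂μ, μ[t.indicator (1 : Ω → ℝ) | m] ω ≠ 0)
    (h0 : ∀ s, MeasurableSet[m] s → ∫ ω in s ∩ t, f ω ∂μ = 0) :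
    f =ᵐ[μ] 0 := by
  have hft : f * t.indicator 1 = t.indicator f := by
    ext ω; by_cases hω : ω ∈ t <;> simp [hω]
  have hprod : μ[t.indicator f | m] =ᵐ[μ] f * μ[t.indicator (1 : Ω → ℝ) | m] := hft ▸
    condExp_mul_of_stronglyMeasurable_left hf (hft ▸ hfi.indicator ht)
      ((integrable_const 1).indicator ht)
  have hzero : 0 =ᵐ[μ] μ[t.indicator f | m] :=
    ae_eq_condExp_of_forall_setIntegral_eq hm (hfi.indicator ht)
      (fun _ _ _ => integrableOn_zero)
      (fun s hs _ => by rw [setIntegral_indicator ht, h0 s hs, Pi.zero_def, integral_zero])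
      aestronglyMeasurable_zero
  filter_upwards [hprod, hzero, hpos] with ω hprod hzero hpos
  exact (mul_eq_zero.mp (hzero.trans hprod).symm).resolve_right hpos

section ComapConditioning

variable {Ω 𝒳 : Type*} [MeasurableSpace Ω] [m𝒳 : MeasurableSpace 𝒳] {μ : Measure Ω}
  [IsFiniteMeasure μ] {X : Ω → 𝒳}

theorem comp_ae_eq_condExp_comap (hX : Measurable X) {g : 𝒳 → ℝ} (hg : Measurable g)
    (hgi : Integrable (g ∘ X) μ) {f : Ω → ℝ} (hf : Integrable f μ)
    (h : ∀ B, MeasurableSet B → ∫ ω in X ⁻¹' B, g (X ω) ∂μ = ∫ ω in X ⁻¹' B, f ω ∂μ) :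
    g ∘ X =ᵐ[μ] μ[f | m𝒳.comap X] :=
  ae_eq_condExp_of_forall_setIntegral_eq hX.comap_le hf (fun _ _ _ => hgi.integrableOn)
    (by rintro _ ⟨B, hB, rfl⟩ _; exact h B hB)
    (hg.comp (comap_measurable X)).aestronglyMeasurable

theorem comp_ae_eq_of_setIntegral_inter_eq (hX : Measurable X) {t : Set Ω} (ht : MeasurableSet t)
    {e : 𝒳 → ℝ} (he : Measurable e) (hei : Integrable (e ∘ X) μ)
    (hePS : ∀ B, MeasurableSet B → ∫ ω in X ⁻¹' B, e (X ω) ∂μ = μ.real (X ⁻¹' B ∩ t))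
    (he0 : ∀ᵐ ω ∂μ, e (X ω) ≠ 0) {f g : 𝒳 → ℝ} (hf : Measurable f) (hg : Measurable g)
    (hfi : Integrable (f ∘ X) μ) (hgi : Integrable (g ∘ X) μ)
    (hfg : ∀ B, MeasurableSet B →
      ∫ ω in X ⁻¹' B ∩ t, f (X ω) ∂μ = ∫ ω in X ⁻¹' B ∩ t, g (X ω) ∂μ) :
    f ∘ X =ᵐ[μ] g ∘ X := by
  have hcond : e ∘ X =ᵐ[μ] μ[t.indicator 1 | m𝒳.comap X] :=
    comp_ae_eq_condExp_comap hX he hei ((integrable_const 1).indicator ht) fun B hB => by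
      rw [hePS B hB, setIntegral_indicator ht]; simp
  have hsub : f ∘ X - g ∘ X =ᵐ[μ] 0 :=
    ae_eq_zero_of_setIntegral_inter_eq_zero hX.comap_le
      ((hf.sub hg).comp (comap_measurable X)).stronglyMeasurable (hfi.sub hgi) ht
      (by filter_upwards [hcond, he0] with ω h h0; rwa [← h])
      (by
        rintro _ ⟨B, hB, rfl⟩
        rw [integral_sub' hfi.integrableOn hgi.integrableOn]
        exact sub_eq_zero.mpr (hfg B hB))
  filter_upwards [hsub] with ω h using sub_eq_zero.mp h

end ComapConditioning

theorem tendsto_div_of_tendsto_div_natCast {u v : ℕ → ℝ} {a b : ℝ}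
    (hu : Tendsto (fun n => u n / n) atTop (𝓝 a)) (hv : Tendsto (fun n => v n / n) atTop (𝓝 b))
    (hb : b ≠ 0) : Tendsto (fun n => u n / v n) atTop (𝓝 (a / b)) := by
  refine (hu.div hv hb).congr' ?_
  filter_upwards [eventually_ne_atTop 0] with n hn
  exact div_div_div_cancel_right₀ (Nat.cast_ne_zero.mpr hn) _ _

theorem strong_law_ae_comp {Ω β : Type*} [MeasurableSpace Ω] [MeasurableSpace β]
    {μ : Measure Ω} {Z : ℕ → Ω → β} {Z₀ : Ω → β} (hindep : iIndepFun Z μ)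
    (hident : ∀ i, IdentDistrib (Z i) Z₀ μ μ) {F : β → ℝ} (hF : Measurable F)
    (hFi : Integrable (F ∘ Z₀) μ) :
    ∀ᵐ ω ∂μ, Tendsto (fun n : ℕ => (∑ i ∈ range n, F (Z i ω)) / n) atTop
      (𝓝 (∫ ω, F (Z₀ ω) ∂μ)) := by
  have hid : ∀ i, IdentDistrib (F ∘ Z i) (F ∘ Z₀) μ μ := fun i => (hident i).comp hF
  have hslln := strong_law_ae_real (fun i => F ∘ Z i)
    ((hid 0).integrable_iff.mpr hFi) (fun i j hij => (hindep.indepFun hij).comp hF hF)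
    fun i => (hid i).trans (hid 0).symm
  rwa [(hid 0).integral_eq] at hslln

theorem gformula_estimator_consistency_general
    {Ω : Type*} [MeasurableSpace Ω] (P : Measure Ω) [IsProbabilityMeasure P]
    {𝒳 : Type*} [MeasurableSpace 𝒳]
    (X : Ω → 𝒳) (hX : Measurable X)
    (A : Ω → ℝ) (hA : Measurable A)
    (Y : Ω → ℝ)
    (a : ℝ) (ha : a = 0 ∨ a = 1)
    (Y1 Y0 : Ω → ℝ)
    (Ya : Ω → ℝ) (hYa : Ya = if a = 1 then Y1 else Y0)
    -- consistency of potential outcomes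
    (hcons : ∀ᵐ ω ∂P, Y ω = A ω * Y1 ω + (1 - A ω) * Y0 ω)
    -- a version of the propensity score
    (e : 𝒳 → ℝ) (he : Measurable e)
    (hePS : ∀ B : Set 𝒳, MeasurableSet B →
      ∫ ω in X ⁻¹' B, e (X ω) ∂P = (P (X ⁻¹' B ∩ {ω | A ω = a})).toReal)
    -- a version of the outcome regression E[Y | X, A = a]
    (m : 𝒳 → ℝ) (hm : Measurable m)
    (hmint : Integrable (fun ω => m (X ω)) P)
    (hmOR : ∀ B : Set 𝒳, MeasurableSet B →
      ∫ ω in X ⁻¹' B ∩ {ω | A ω = a}, Y ω ∂P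
        = ∫ ω in X ⁻¹' B ∩ {ω | A ω = a}, m (X ω) ∂P)
    -- a version of E[Y^a | X]
    (ν : 𝒳 → ℝ) (hν : Measurable ν)
    (hνint : Integrable (fun ω => ν (X ω)) P)
    (hνCE : ∀ B : Set 𝒳, MeasurableSet B →
      ∫ ω in X ⁻¹' B, Ya ω ∂P = ∫ ω in X ⁻¹' B, ν (X ω) ∂P)
    -- mean exchangeability
    (hexch : ∀ B : Set 𝒳, MeasurableSet B →
      ∫ ω in X ⁻¹' B ∩ {ω | A ω = a}, Ya ω ∂P
        = ∫ ω in X ⁻¹' B ∩ {ω | A ω = a}, ν (X ω) ∂P)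
    -- positivity
    (ε : ℝ) (hε : 0 < ε)
    (hpos : ∀ᵐ ω ∂P, ε ≤ e (X ω) ∧ e (X ω) ≤ 1 - ε)
    -- the subgroup, with P(X ∈ w) > 0
    (w : Set 𝒳) (hw : MeasurableSet w)
    (hwpos : 0 < (P (X ⁻¹' w)).toReal)
    -- i.i.d. copies of (X, A, Y)
    (Xs : ℕ → Ω → 𝒳) (As : ℕ → Ω → ℝ) (Ys : ℕ → Ω → ℝ)
    (hindep : ProbabilityTheory.iIndepFun
      (fun i ω => (Xs i ω, As i ω, Ys i ω)) P)
    (hident : ∀ i, ProbabilityTheory.IdentDistrib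
      (fun ω => (Xs i ω, As i ω, Ys i ω)) (fun ω => (X ω, A ω, Y ω)) P P) :
    ∀ᵐ ω ∂P, Tendsto (fun n : ℕ =>
        (∑ i ∈ Finset.range n, (Xs i ⁻¹' w).indicator (fun ω' => m (Xs i ω')) ω)
          / (∑ i ∈ Finset.range n, (Xs i ⁻¹' w).indicator (fun _ => (1 : ℝ)) ω))
      atTop
      (𝓝 ((1 / (P (X ⁻¹' w)).toReal) * ∫ ω' in X ⁻¹' w, Ya ω' ∂P)) := by
  have hYa_of_treated : ∀ᵐ ω ∂P, A ω = a → Y ω = Ya ω := by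
    filter_upwards [hcons] with ω hω hAa
    rcases ha with rfl | rfl <;> simp_all
  have heX_bound : ∀ᵐ ω ∂P, ‖e (X ω)‖ ≤ 1 := by
    filter_upwards [hpos] with ω ⟨hlo, hhi⟩
    rw [Real.norm_eq_abs, abs_le]
    constructor <;> linarith
  have htreated : MeasurableSet {ω | A ω = a} := hA (measurableSet_singleton a)
  have hmν : (fun ω => m (X ω)) =ᵐ[P] fun ω => ν (X ω) :=
    comp_ae_eq_of_setIntegral_inter_eq hX htreated he
      (.of_bound (he.comp hX).aestronglyMeasurable 1 heX_bound) hePS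
      (by filter_upwards [hpos] with ω h using (hε.trans_le h.1).ne') hm hν hmint hνint
      fun B hB => by
        rw [← hmOR B hB, ← hexch B hB]
        refine setIntegral_congr_ae ((hX hB).inter htreated) ?_
        filter_upwards [hYa_of_treated] with ω h hω using h hω.2
  have hkey : ∫ ω in X ⁻¹' w, m (X ω) ∂P = ∫ ω in X ⁻¹' w, Ya ω ∂P := by
    rw [hνCE w hw]
    exact integral_congr_ae (ae_restrict_of_ae hmν)
  have hXs : iIndepFun Xs P := hindep.comp (fun _ => Prod.fst) fun _ => measurable_fst
  have hXsX : ∀ i, IdentDistrib (Xs i) X P P := fun i => (hident i).comp measurable_fst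
  have hnum := strong_law_ae_comp hXs hXsX (hm.indicator hw) (hmint.indicator (hX hw))
  have hden := strong_law_ae_comp hXs hXsX (measurable_const.indicator hw)
    ((integrable_const (1 : ℝ)).indicator (hX hw))
  have hnum_lim : ∫ ω, w.indicator m (X ω) ∂P = ∫ ω in X ⁻¹' w, Ya ω ∂P := by
    rw [← hkey, ← integral_indicator (hX hw)]; rfl
  have hden_lim : ∫ ω, w.indicator (fun _ => (1 : ℝ)) (X ω) ∂P = (P (X ⁻¹' w)).toReal := by
    rw [← measureReal_def, ← integral_indicator_one (hX hw)]; rfl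
  filter_upwards [hnum, hden] with ω hnum hden
  rw [hnum_lim] at hnum
  rw [hden_lim] at hden
  rw [one_div_mul_eq_div]
  exact tendsto_div_of_tendsto_div_natCast hnum hden hwpos.ne'

/-- Consistency of the subgroup g-formula estimator with correctly
specified outcome regression: the ratio `(Σᵢ 1{Xᵢ ∈ w} m_a(Xᵢ)) / (Σᵢ 1{Xᵢ ∈ w})`
converges almost surely to `E[Y^a | X ∈ w]`. -/
theorem gformula_estimator_consistency
    {Ω : Type*} [MeasurableSpace Ω] (P : Measure Ω) [IsProbabilityMeasure P]
    {𝒳 : Type*} [MeasurableSpace 𝒳]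
    (X : Ω → 𝒳) (hX : Measurable X)
    (A : Ω → ℝ) (hA : Measurable A) (hA01 : ∀ ω, A ω = 0 ∨ A ω = 1)
    (Y : Ω → ℝ) (hY : Measurable Y) (hYint : Integrable Y P)
    (a : ℝ) (ha : a = 0 ∨ a = 1)
    (Y1 Y0 : Ω → ℝ) (hY1m : Measurable Y1) (hY0m : Measurable Y0)
    (hY1int : Integrable Y1 P) (hY0int : Integrable Y0 P)
    (Ya : Ω → ℝ) (hYa : Ya = if a = 1 then Y1 else Y0)
    -- consistency of potential outcomes
    (hcons : ∀ᵐ ω ∂P, Y ω = A ω * Y1 ω + (1 - A ω) * Y0 ω)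
    -- a version of the propensity score
    (e : 𝒳 → ℝ) (he : Measurable e)
    (hePS : ∀ B : Set 𝒳, MeasurableSet B →
      ∫ ω in X ⁻¹' B, e (X ω) ∂P = (P (X ⁻¹' B ∩ {ω | A ω = a})).toReal)
    -- a version of the outcome regression E[Y | X, A = a]
    (m : 𝒳 → ℝ) (hm : Measurable m)
    (hmint : Integrable (fun ω => m (X ω)) P)
    (hmOR : ∀ B : Set 𝒳, MeasurableSet B →
      ∫ ω in X ⁻¹' B ∩ {ω | A ω = a}, Y ω ∂P
        = ∫ ω in X ⁻¹' B ∩ {ω | A ω = a}, m (X ω) ∂P)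
    -- a version of E[Y^a | X]
    (ν : 𝒳 → ℝ) (hν : Measurable ν)
    (hνint : Integrable (fun ω => ν (X ω)) P)
    (hνCE : ∀ B : Set 𝒳, MeasurableSet B →
      ∫ ω in X ⁻¹' B, Ya ω ∂P = ∫ ω in X ⁻¹' B, ν (X ω) ∂P)
    -- mean exchangeability
    (hexch : ∀ B : Set 𝒳, MeasurableSet B →
      ∫ ω in X ⁻¹' B ∩ {ω | A ω = a}, Ya ω ∂P
        = ∫ ω in X ⁻¹' B ∩ {ω | A ω = a}, ν (X ω) ∂P)
    -- positivity
    (ε : ℝ) (hε : 0 < ε)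
    (hpos : ∀ᵐ ω ∂P, ε ≤ e (X ω) ∧ e (X ω) ≤ 1 - ε)
    -- the subgroup, with P(X ∈ w) > 0
    (w : Set 𝒳) (hw : MeasurableSet w)
    (hwpos : 0 < (P (X ⁻¹' w)).toReal)
    -- i.i.d. copies of (X, A, Y)
    (Xs : ℕ → Ω → 𝒳) (As : ℕ → Ω → ℝ) (Ys : ℕ → Ω → ℝ)
    (hmeas : ∀ i, Measurable (fun ω => (Xs i ω, As i ω, Ys i ω)))
    (hindep : ProbabilityTheory.iIndepFun
      (fun i ω => (Xs i ω, As i ω, Ys i ω)) P)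
    (hident : ∀ i, ProbabilityTheory.IdentDistrib
      (fun ω => (Xs i ω, As i ω, Ys i ω)) (fun ω => (X ω, A ω, Y ω)) P P) :
    ∀ᵐ ω ∂P, Tendsto (fun n : ℕ =>
        (∑ i ∈ Finset.range n, (Xs i ⁻¹' w).indicator (fun ω' => m (Xs i ω')) ω)
          / (∑ i ∈ Finset.range n, (Xs i ⁻¹' w).indicator (fun _ => (1 : ℝ)) ω))
      atTop
      (𝓝 ((1 / (P (X ⁻¹' w)).toReal) * ∫ ω' in X ⁻¹' w, Ya ω' ∂P)) :=
  gformula_estimator_consistency_general P X hX A hA Y a ha Y1 Y0 Ya hYa hcons e he hePS m hm hmint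
    hmOR ν hν hνint hνCE hexch ε hε hpos w hw hwpos Xs As Ys hindep hident
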